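/- Let G be a connected finite simple graph of order n ≥ 13 with degree sequence d₁ ≤ ⋯ ≤ d_n satisfying the weak Chvátal condition (for all 1 ≤ i < n/2, d_i ≥ i + 1 or d_{n−i} ≥ n − i − 1), having at most one vertex of degree 1, and with m(G,2) > 2. Let L = {v ∈ V(G) : d(v) ≥ (n−1)/2}, let I be a set of maximum cardinality among all closures ⟨A⟩ of two-element sets A ⊆ V(G) under 2-neighbor bootstrap percolation that have nonempty intersection with L, and let U = V(G) ∖ I. Then |L ∩ U| ≥ 3. -/

import Mathlib

open Finset
open scoped Classical

/-- One step of the `r`-neighbor bootstrap percolation process: all currently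
active vertices stay active, and every vertex with at least `r` active
neighbors becomes active. -/
noncomputable def bootStep {V : Type*} [Fintype V] (G : SimpleGraph V) (r : ℕ)
    (A : Finset V) : Finset V :=
  A ∪ Finset.univ.filter (fun v => r ≤ (G.neighborFinset v ∩ A).card)

/-- The closure of `A` under `r`-neighbor bootstrap percolation, i.e. `⋃ₜ Aₜ`.
Since the process is monotone on a finite vertex set, iterating `|V|` times
reaches the fixed point. -/
noncomputable def bootClosure {V : Type*} [Fintype V] (G : SimpleGraph V) (r : ℕ)
    (A : Finset V) : Finset V :=
  (bootStep G r)^[Fintype.card V] A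

/-- `G` `r`-percolates from the initially active set `A`. -/
def Percolates {V : Type*} [Fintype V] (G : SimpleGraph V) (r : ℕ)
    (A : Finset V) : Prop :=
  ∃ t : ℕ, (bootStep G r)^[t] A = Finset.univ

/-- `m(G, r)`: the minimum size of an `r`-contagious set in `G`. -/
noncomputable def minContagious {V : Type*} [Fintype V] (G : SimpleGraph V) (r : ℕ) : ℕ :=
  sInf {k : ℕ | ∃ A : Finset V, A.card = k ∧ Percolates G r A}


/-!
Suppose `|L ∩ U| ≤ 2`, where `U = V ∖ I` has `u` vertices. Since `I` is closed under
2-neighbour bootstrap percolation, every vertex of `U` has at most one neighbour in `I`; hence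
there are at most `u` edges between `I` and `U`, and every vertex of `U` has degree at most `u`.
The weak Chvátal condition gives `|L| ≥ ⌈n/2⌉`, so `I` contains at least `⌈n/2⌉ - 2` vertices
of `L`. The basic obstruction comes from maximality: no closure of a pair contains `I`, a
vertex outside `I` and a vertex of `L`. In particular `I ∩ L` contains at most one vertex
adjacent to all of `I`, because two such vertices `h, h'` together with an edge `yw` from `U`
to `I` make the closure of `{y, h}` swallow `w`, then `h'`, then all of `I`.

The proof splits on `u`. For `u = 0` the pair generating `I` percolates, against `m(G, 2) > 2`.
For `u = 1` the vertex of `U` is pendant; the Chvátal condition at `i = 1` gives two vertices of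
degree `≥ n - 2`, and a pair containing the pendant vertex closes over at least `n - 1`
vertices; by maximality it misses one, which would be a second vertex of degree one. For
`2 ≤ u < ⌊n/2⌋` the condition at `i = u` gives `u + 1` vertices of degree `≥ n - u - 1` in `I`:
one of them is adjacent to all of `I`, the other `u` miss exactly one vertex of `I` and have
exactly one neighbour in `U`, and for any two of these some pair closes over `I` and a vertex
of `U`. For `u ≥ ⌈n/2⌉`, every vertex of `I ∩ L` but one sends at least `u + 2 - ⌈n/2⌉ ≥ 2`
edges to `U`, which is too many once `n ≥ 13`. Finally, for `n = 2u + 1`, either `|L| ≤ u + 2`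
and the condition at `i = u - 1` produces `u` vertices of degree `≥ u + 1` in `I`, all adjacent
to all of `I`, or `I ⊆ L`, the two vertices of `L ∩ U` force `I` minus one vertex to be a
clique, and the edges from `I` to `U` are again too many.
-/

lemma Finset.isFixedPt_iterate_card_of_subset {α : Type*} [Fintype α]
    {f : Finset α → Finset α} (hf : ∀ s, s ⊆ f s) (A : Finset α) :
    Function.IsFixedPt f (f^[Fintype.card α] A) := by
  have key : ∀ m, Function.IsFixedPt f (f^[m] A) ∨ m ≤ #(f^[m] A) := by
    intro m
    induction m with
    | zero => exact Or.inr (Nat.zero_le _)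
    | succ m ih =>
      rw [Function.iterate_succ_apply']
      by_cases hfix : Function.IsFixedPt f (f^[m] A)
      · left; rwa [hfix.eq]
      · have hlt := card_lt_card ((hf _).ssubset_of_ne (Ne.symm hfix))
        have := ih.resolve_left hfix
        omega
  rcases key (Fintype.card α) with hfix | hcard
  · exact hfix
  · rw [eq_univ_of_card _ (le_antisymm (card_le_univ _) hcard)]
    exact eq_univ_of_forall fun v => hf _ (mem_univ v)

lemma Finset.eq_one_of_sum_le_card {ι : Type*} {s : Finset ι} {f : ι → ℕ}
    (h : ∀ i ∈ s, 1 ≤ f i) (hs : ∑ i ∈ s, f i ≤ #s) : ∀ i ∈ s, f i = 1 := fun i hi =>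
  ((sum_eq_sum_iff_of_le h).mp (le_antisymm (sum_le_sum h) (by simpa using hs)) i hi).symm

lemma Finset.card_inter_add_card_inter_compl {α : Type*} [Fintype α] [DecidableEq α]
    (s t : Finset α) : #(s ∩ t) + #(s ∩ tᶜ) = #s := by
  rw [← sdiff_eq_inter_compl, card_inter_add_card_sdiff]

lemma SimpleGraph.Connected.exists_adj_notMem_mem {V : Type*} {G : SimpleGraph V}
    (hconn : G.Connected) {s : Finset V} {a b : V} (ha : a ∈ s) (hb : b ∉ s) :
    ∃ y ∉ s, ∃ w ∈ s, G.Adj y w := by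
  obtain ⟨d, -, hd1, hd2⟩ :=
    (hconn.preconnected a b).some.exists_boundary_dart (s : Set V) ha hb
  exact ⟨d.snd, hd2, d.fst, hd1, d.adj.symm⟩

section Bootstrap

variable {V : Type*} [Fintype V] (G : SimpleGraph V) (r : ℕ)

lemma subset_bootStep (A : Finset V) : A ⊆ bootStep G r A := subset_union_left

lemma subset_bootClosure (A : Finset V) : A ⊆ bootClosure G r A := by
  unfold bootClosure
  generalize Fintype.card V = m
  induction m with
  | zero => exact subset_rfl
  | succ m ih => exact ih.trans (Function.iterate_succ_apply' _ m A ▸ subset_bootStep G r _)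

lemma bootStep_bootClosure (A : Finset V) :
    bootStep G r (bootClosure G r A) = bootClosure G r A :=
  isFixedPt_iterate_card_of_subset (subset_bootStep G r) A

lemma bootClosure_ne_univ_of_card_lt {A : Finset V} (hA : #A < minContagious G r) :
    bootClosure G r A ≠ univ := fun h =>
  (Nat.sInf_le ⟨A, rfl, Fintype.card V, h⟩ : minContagious G r ≤ #A).not_gt hA

variable {G r} {S : Finset V} {v : V}

lemma mem_of_le_card_inter_of_bootStep_eq (hS : bootStep G r S = S)
    (hv : r ≤ #(G.neighborFinset v ∩ S)) : v ∈ S :=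
  hS ▸ mem_union_right _ (mem_filter.mpr ⟨mem_univ v, hv⟩)

lemma card_inter_lt_of_bootStep_eq (hS : bootStep G r S = S) (hv : v ∉ S) :
    #(G.neighborFinset v ∩ S) < r :=
  lt_of_not_ge fun h => hv (mem_of_le_card_inter_of_bootStep_eq hS h)

lemma mem_of_adj_of_adj (hS : bootStep G 2 S = S) {a b : V} (ha : a ∈ S) (hb : b ∈ S)
    (hab : a ≠ b) (hva : G.Adj v a) (hvb : G.Adj v b) : v ∈ S := by
  refine mem_of_le_card_inter_of_bootStep_eq hS ?_
  rw [← card_pair hab]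
  refine card_le_card fun x hx => ?_
  rcases mem_insert.mp hx with rfl | hx
  · exact mem_inter.mpr ⟨G.mem_neighborFinset _ _ |>.mpr hva, ha⟩
  · rw [mem_singleton.mp hx]
    exact mem_inter.mpr ⟨G.mem_neighborFinset _ _ |>.mpr hvb, hb⟩

lemma subset_of_adj_of_adj (hS : bootStep G 2 S = S) {a b : V} (ha : a ∈ S) (hb : b ∈ S)
    (hab : a ≠ b) {T : Finset V} (hT : ∀ z ∈ T, z ≠ a → z ≠ b → G.Adj z a ∧ G.Adj z b) :
    T ⊆ S := by
  intro z hz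
  by_cases hza : z = a
  · exact hza ▸ ha
  by_cases hzb : z = b
  · exact hzb ▸ hb
  exact mem_of_adj_of_adj hS ha hb hab (hT z hz hza hzb).1 (hT z hz hza hzb).2

end Bootstrap

section DegIn

variable {V : Type*} [Fintype V] (G : SimpleGraph V)

noncomputable def degIn (s : Finset V) (v : V) : ℕ := #(G.neighborFinset v ∩ s)

variable {G} {s : Finset V} {v : V}

lemma degIn_add_degIn_compl (s : Finset V) (v : V) :
    degIn G s v + degIn G sᶜ v = G.degree v := by
  rw [degIn, degIn, ← sdiff_eq_inter_compl, card_inter_add_card_sdiff,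
    G.card_neighborFinset_eq_degree]

lemma degIn_le_card_sub_one (hv : v ∈ s) : degIn G s v ≤ #s - 1 := by
  rw [← card_erase_of_mem hv]
  exact card_le_card fun x hx => mem_erase.mpr
    ⟨(G.ne_of_adj ((G.mem_neighborFinset _ _).mp (mem_inter.mp hx).1)).symm, (mem_inter.mp hx).2⟩

lemma exists_adj_of_degIn_pos (h : 0 < degIn G s v) : ∃ x ∈ s, G.Adj v x := by
  obtain ⟨x, hx⟩ := card_pos.mp h
  exact ⟨x, (mem_inter.mp hx).2, (G.mem_neighborFinset _ _).mp (mem_inter.mp hx).1⟩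

lemma degIn_eq_zero {x : V} (h : degIn G s v = 0) (hx : x ∈ s) : ¬ G.Adj v x := fun hvx => by
  rw [degIn, card_eq_zero] at h
  simpa [h] using mem_inter.mpr ⟨(G.mem_neighborFinset _ _).mpr hvx, hx⟩

lemma adj_of_card_sub_one_le_degIn {z : V} (hv : v ∈ s) (h : #s - 1 ≤ degIn G s v)
    (hz : z ∈ s) (hzv : z ≠ v) : G.Adj v z := by
  have hsub : G.neighborFinset v ∩ s ⊆ s.erase v := fun x hx => mem_erase.mpr
    ⟨(G.ne_of_adj ((G.mem_neighborFinset _ _).mp (mem_inter.mp hx).1)).symm, (mem_inter.mp hx).2⟩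
  have heq := eq_of_subset_of_card_le hsub (by rw [card_erase_of_mem hv]; exact h)
  exact (G.mem_neighborFinset _ _).mp (mem_inter.mp (heq ▸ mem_erase.mpr ⟨hzv, hz⟩)).1

lemma exists_nonadj_of_degIn_add_two_eq (hv : v ∈ s) (hdeg : degIn G s v + 2 = #s) :
    ∃ m ∈ s, m ≠ v ∧ ¬ G.Adj v m ∧ ∀ z ∈ s, z ≠ v → z ≠ m → G.Adj v z := by
  have hsub : G.neighborFinset v ∩ s ⊆ s.erase v := fun x hx => mem_erase.mpr
    ⟨(G.ne_of_adj ((G.mem_neighborFinset _ _).mp (mem_inter.mp hx).1)).symm, (mem_inter.mp hx).2⟩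
  obtain ⟨m, hm⟩ := card_eq_one.mp (show #(s.erase v \ (G.neighborFinset v ∩ s)) = 1 by
    rw [card_sdiff_of_subset hsub, card_erase_of_mem hv, ← degIn]
    omega)
  have hmem : ∀ z, z ∈ s.erase v \ (G.neighborFinset v ∩ s) ↔ z = m := by simp [hm]
  obtain ⟨hmer, hmN⟩ := mem_sdiff.mp ((hmem m).mpr rfl)
  refine ⟨m, mem_of_mem_erase hmer, ne_of_mem_erase hmer, fun hvm => hmN ?_,
    fun z hz hzv hzm => ?_⟩
  · exact mem_inter.mpr ⟨(G.mem_neighborFinset _ _).mpr hvm, mem_of_mem_erase hmer⟩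
  · by_contra hvz
    exact hzm ((hmem z).mp (mem_sdiff.mpr ⟨mem_erase.mpr ⟨hzv, hz⟩,
      fun hz' => hvz ((G.mem_neighborFinset _ _).mp (mem_inter.mp hz').1)⟩))

lemma adj_of_card_sub_two_le_degree {g x : V} (hg : Fintype.card V - 2 ≤ G.degree g)
    (hgx : ¬ G.Adj g x) (hxg : x ≠ g) {z : V} (hzg : z ≠ g) (hzx : z ≠ x) : G.Adj g z := by
  have hdeg : degIn G (univ.erase x) g = G.degree g := by
    rw [degIn, ← G.card_neighborFinset_eq_degree]
    congr 1
    exact inter_eq_left.mpr fun v hv =>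
      mem_erase.mpr ⟨fun hvx => hgx (hvx ▸ (G.mem_neighborFinset _ _).mp hv), mem_univ v⟩
  refine adj_of_card_sub_one_le_degIn (mem_erase.mpr ⟨Ne.symm hxg, mem_univ g⟩) ?_
    (mem_erase.mpr ⟨hzx, mem_univ z⟩) hzg
  rw [hdeg, card_erase_of_mem (mem_univ x), card_univ]
  omega

lemma sum_degIn_comm (s t : Finset V) : ∑ v ∈ s, degIn G t v = ∑ v ∈ t, degIn G s v := by
  have h : ∀ (s : Finset V) v, degIn G s v = ∑ x ∈ s, if G.Adj v x then 1 else 0 :=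
    fun s v => by
      rw [degIn, ← card_filter]
      congr 1
      ext x
      simp [and_comm]
  simp only [h]
  rw [sum_comm]
  exact sum_congr rfl fun _ _ => sum_congr rfl fun _ _ => by rw [G.adj_comm]

variable {S : Finset V}

lemma degIn_le_one_of_bootStep_eq (hS : bootStep G 2 S = S) (hv : v ∉ S) : degIn G S v ≤ 1 :=
  Nat.lt_succ_iff.mp (card_inter_lt_of_bootStep_eq hS hv)

lemma sum_degIn_compl_le_of_bootStep_eq (hS : bootStep G 2 S = S) :
    ∑ w ∈ S, degIn G Sᶜ w ≤ #Sᶜ := by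
  rw [sum_degIn_comm]
  simpa using sum_le_card_nsmul Sᶜ _ 1 fun v hv =>
    degIn_le_one_of_bootStep_eq hS (mem_compl.mp hv)

lemma degree_le_card_compl_of_bootStep_eq (hS : bootStep G 2 S = S) (hv : v ∉ S) :
    G.degree v ≤ #Sᶜ := by
  have h1 := degIn_le_one_of_bootStep_eq hS hv
  have h2 := degIn_le_card_sub_one (G := G) (mem_compl.mpr hv)
  have h3 := card_pos.mpr ⟨v, mem_compl.mpr hv⟩
  have := degIn_add_degIn_compl (G := G) S v
  omega

end DegIn

section WeakChvatal

variable {V : Type*} [Fintype V] (G : SimpleGraph V)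

/-- The weak Chvátal condition, read off the sorted degree sequence `d₁ ≤ ⋯ ≤ dₙ`:
`dᵢ ≤ i` means that at least `i` vertices have degree at most `i`, and `d_{n-i} ≥ n - i - 1`
that at least `i + 1` vertices have degree at least `n - i - 1`. -/
def WeakChvatal : Prop :=
  ∀ i, 1 ≤ i → 2 * i < Fintype.card V → i ≤ #{v | G.degree v ≤ i} →
    i + 1 ≤ #{v | Fintype.card V - i - 1 ≤ G.degree v}

variable {G} {n : ℕ} {e : Fin n ≃ V} {L : Finset V}

lemma card_filter_degree_le_le_of_monotone (hmono : Monotone fun i => G.degree (e i))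
    {j : Fin n} {x : ℕ} (hx : x < G.degree (e j)) : #{v | G.degree v ≤ x} ≤ j := by
  rw [← Fin.card_Iio j, ← card_map e.toEmbedding]
  refine card_le_card fun v hv => ?_
  obtain ⟨i, rfl⟩ := e.surjective v
  refine mem_map_of_mem _ (mem_Iio.mpr ?_)
  by_contra! hji
  have : G.degree (e j) ≤ G.degree (e i) := hmono hji
  have := (mem_filter.mp hv).2
  omega

lemma le_card_filter_le_degree_of_monotone (hmono : Monotone fun i => G.degree (e i))
    {j : Fin n} {x : ℕ} (hx : x ≤ G.degree (e j)) : n - j ≤ #{v | x ≤ G.degree v} := by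
  rw [← Fin.card_Ici j, ← card_map e.toEmbedding]
  refine card_le_card fun v hv => ?_
  obtain ⟨i, hi, rfl⟩ := mem_map.mp hv
  exact mem_filter.mpr ⟨mem_univ _, hx.trans (hmono (mem_Ici.mp hi))⟩

lemma weakChvatal_of_monotone (hmono : Monotone fun i => G.degree (e i))
    (hchv : ∀ i, 1 ≤ i → 2 * i < n → ∀ (hi : i - 1 < n) (hi' : n - i - 1 < n),
      i + 1 ≤ G.degree (e ⟨i - 1, hi⟩) ∨ n - i - 1 ≤ G.degree (e ⟨n - i - 1, hi'⟩)) :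
    WeakChvatal G := by
  have hn : Fintype.card V = n := by simpa using (Fintype.card_congr e).symm
  intro i h1 h2 hlow
  rw [hn] at h2 ⊢
  rcases hchv i h1 h2 (by omega) (by omega) with hd | hd
  · have := card_filter_degree_le_le_of_monotone hmono (x := i) (by simpa using hd)
    dsimp only at this
    omega
  · have := le_card_filter_le_degree_of_monotone hmono hd
    dsimp only at this
    omega

lemma WeakChvatal.card_sub_half_le (hchv : WeakChvatal G)
    (hL : ∀ v, v ∈ L ↔ Fintype.card V / 2 ≤ G.degree v) (hn : 3 ≤ Fintype.card V) :
    Fintype.card V - Fintype.card V / 2 ≤ #L := by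
  set c := Fintype.card V - Fintype.card V / 2
  by_cases hlow : c - 1 ≤ #{v | G.degree v ≤ c - 1}
  · refine le_trans ?_ ((hchv (c - 1) (by omega) (by omega) hlow).trans
      (card_le_card fun v hv => ?_))
    · omega
    rw [hL]
    have := (mem_filter.mp hv).2
    omega
  · have hsplit := card_filter_add_card_filter_not (s := univ)
      (p := fun v => G.degree v ≤ c - 1)
    rw [card_univ] at hsplit
    refine le_trans ?_ (card_le_card (s := {v | ¬ G.degree v ≤ c - 1}) fun v hv => ?_)
    · omega
    · rw [hL]
      have := (mem_filter.mp hv).2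
      omega

lemma WeakChvatal.le_card_filter_succ_le_degree (hchv : WeakChvatal G)
    (hL : ∀ v, v ∈ L ↔ Fintype.card V / 2 ≤ G.degree v) {k : ℕ}
    (hodd : Fintype.card V = 2 * k + 1) (hk : 2 ≤ k) (hLk : #L ≤ k + 2) :
    k ≤ #{v | k + 1 ≤ G.degree v} := by
  have hlow : k - 1 ≤ #{v | G.degree v ≤ k - 1} := by
    have hsplit := card_filter_add_card_filter_not (s := univ) (p := fun v => G.degree v ≤ k - 1)
    have : #{v | ¬ G.degree v ≤ k - 1} ≤ #L := card_le_card fun v hv =>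
      (hL v).mpr (by have := (mem_filter.mp hv).2; omega)
    rw [card_univ] at hsplit
    omega
  have hH : ({v | Fintype.card V - (k - 1) - 1 ≤ G.degree v} : Finset V) =
      ({v | k + 1 ≤ G.degree v} : Finset V) := filter_congr fun v _ => by omega
  have := hchv (k - 1) (by omega) (by omega) hlow
  rw [hH] at this
  omega

lemma WeakChvatal.two_le_degree (hchv : WeakChvatal G) (hn : 3 ≤ Fintype.card V)
    (hdeg : ∀ v, G.degree v + 3 ≤ Fintype.card V) (v : V) : 2 ≤ G.degree v := by
  by_contra! hv
  have h := hchv 1 le_rfl (by omega) (card_pos.mpr ⟨v, mem_filter.mpr ⟨mem_univ v, by omega⟩⟩)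
  obtain ⟨w, hw⟩ := card_pos.mp (show 0 < #{v | Fintype.card V - 1 - 1 ≤ G.degree v} by omega)
  have := (mem_filter.mp hw).2
  have := hdeg w
  omega

end WeakChvatal

section MaxPairClosure

variable {V : Type*} [Fintype V] {G : SimpleGraph V} {L I : Finset V}

def MaxPairClosure (G : SimpleGraph V) (L I : Finset V) : Prop :=
  ∀ A : Finset V, #A = 2 → (bootClosure G 2 A ∩ L).Nonempty → #(bootClosure G 2 A) ≤ #I

lemma MaxPairClosure.card_le (hmax : MaxPairClosure G L I) {a b w : V} (hab : a ≠ b)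
    (hw : w ∈ bootClosure G 2 {a, b}) (hwL : w ∈ L) : #(bootClosure G 2 {a, b}) ≤ #I :=
  hmax _ (card_pair hab) ⟨w, mem_inter.mpr ⟨hw, hwL⟩⟩

lemma MaxPairClosure.false_of_subset (hmax : MaxPairClosure G L I) {y b w : V} (hyb : y ≠ b)
    (hy : y ∉ I) (hw : w ∈ bootClosure G 2 {y, b}) (hwL : w ∈ L)
    (hIS : I ⊆ bootClosure G 2 {y, b}) : False :=
  (hmax.card_le hyb hw hwL).not_gt <| card_lt_card <| (ssubset_iff_of_subset hIS).mpr
    ⟨y, subset_bootClosure G 2 _ (mem_insert_self y {b}), hy⟩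

lemma MaxPairClosure.false_of_two_universal (hmax : MaxPairClosure G L I)
    (hconn : G.Connected) {x : V} (hx : x ∉ I) {h h' : V} (hh : h ∈ I ∩ L) (hh' : h' ∈ I ∩ L)
    (hne : h ≠ h') (hU : ∀ z ∈ I, z ≠ h → G.Adj h z) (hU' : ∀ z ∈ I, z ≠ h' → G.Adj h' z) :
    False := by
  obtain ⟨y, hy, w, hw, hyw⟩ := hconn.exists_adj_notMem_mem (mem_inter.mp hh).1 hx
  wlog hwh : w ≠ h generalizing h h'
  · exact this hh' hh hne.symm hU' hU (not_not.mp hwh ▸ hne)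
  obtain ⟨hhI, hhL⟩ := mem_inter.mp hh
  have hS := bootStep_bootClosure G 2 {y, h}
  have hyh : y ≠ h := fun hyh => hy (hyh ▸ hhI)
  have hyS := subset_bootClosure G 2 {y, h} (mem_insert_self y {h})
  have hhS := subset_bootClosure G 2 {y, h} (mem_insert_of_mem (mem_singleton_self h))
  have hwS := mem_of_adj_of_adj hS hyS hhS hyh hyw.symm (hU w hw hwh).symm
  have hh'S : h' ∈ bootClosure G 2 {y, h} := by
    by_cases hh'w : h' = w
    · exact hh'w ▸ hwS
    · exact mem_of_adj_of_adj hS hhS hwS (Ne.symm hwh) (hU' h hhI hne) (hU' w hw (Ne.symm hh'w))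
  exact hmax.false_of_subset hyh hy hhS hhL <| subset_of_adj_of_adj hS hhS hh'S hne
    fun z hz hzh hzh' => ⟨(hU z hz hzh).symm, (hU' z hz hzh').symm⟩

lemma MaxPairClosure.degIn_le_one_of_isClique_erase (hmax : MaxPairClosure G L I)
    (hconn : G.Connected) {x : V} (hx : x ∉ I) (hIL : I ⊆ L) {w : V}
    (hcl : G.IsClique (I.erase w : Set V)) : degIn G I w ≤ 1 := by
  have huniv : ∀ c ∈ G.neighborFinset w ∩ I, ∀ z ∈ I, z ≠ c → G.Adj c z := by
    intro c hc z hz hzc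
    obtain ⟨hwc, hcI⟩ := mem_inter.mp hc
    rw [G.mem_neighborFinset] at hwc
    by_cases hzw : z = w
    · exact hzw ▸ hwc.symm
    · exact hcl (by simp [hcI, (G.ne_of_adj hwc).symm]) (by simp [hz, hzw]) (Ne.symm hzc)
  have hIL' : ∀ c ∈ G.neighborFinset w ∩ I, c ∈ I ∩ L := fun c hc =>
    mem_inter.mpr ⟨(mem_inter.mp hc).2, hIL (mem_inter.mp hc).2⟩
  exact card_le_one.mpr fun a ha b hb => by_contra fun hab =>
    hmax.false_of_two_universal hconn hx (hIL' a ha) (hIL' b hb) hab (huniv a ha) (huniv b hb)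

variable {s a b y : V}

lemma mem_bootClosure_pair_of_adj (hs : ∀ z ∈ I, z ≠ s → G.Adj s z) (ha : a ∈ I)
    (hb : b ∈ I) (has : a ≠ s) (hbs : b ≠ s) (hab : G.Adj a b) (hy : y ∉ I)
    (hya : G.Adj y a) :
    ∀ z ∈ I, z = a ∨ z = b ∨ G.Adj a z ∨ G.Adj b z → z ∈ bootClosure G 2 {y, b} := by
  intro z hz hz'
  have hT := bootStep_bootClosure G 2 {y, b}
  have hyT := subset_bootClosure G 2 {y, b} (mem_insert_self y {b})
  have hbT := subset_bootClosure G 2 {y, b} (mem_insert_of_mem (mem_singleton_self b))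
  have haT := mem_of_adj_of_adj hT hyT hbT (fun h => hy (h ▸ hb)) hya.symm hab
  have hsT := mem_of_adj_of_adj hT haT hbT (G.ne_of_adj hab) (hs a ha has) (hs b hb hbs)
  by_cases hzs : z = s
  · exact hzs ▸ hsT
  rcases hz' with rfl | rfl | hz' | hz'
  · exact haT
  · exact hbT
  · exact mem_of_adj_of_adj hT hsT haT (Ne.symm has) (hs z hz hzs).symm hz'.symm
  · exact mem_of_adj_of_adj hT hsT hbT (Ne.symm hbs) (hs z hz hzs).symm hz'.symm

lemma MaxPairClosure.false_of_adj_cover (hmax : MaxPairClosure G L I) (hsIL : s ∈ I ∩ L)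
    (hs : ∀ z ∈ I, z ≠ s → G.Adj s z) (ha : a ∈ I) (hb : b ∈ I) (has : a ≠ s) (hbs : b ≠ s)
    (hab : G.Adj a b) (hy : y ∉ I) (hya : G.Adj y a)
    (hcover : ∀ z ∈ I, z ≠ a → z ≠ b → G.Adj a z ∨ G.Adj b z) : False := by
  obtain ⟨hsI, hsL⟩ := mem_inter.mp hsIL
  have hmem := mem_bootClosure_pair_of_adj hs ha hb has hbs hab hy hya
  refine hmax.false_of_subset (show y ≠ b from fun h => hy (h ▸ hb)) hy
    (hmem s hsI (Or.inr (Or.inr (Or.inl (hs a ha has).symm)))) hsL fun z hz => hmem z hz ?_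
  by_cases hza : z = a
  · exact Or.inl hza
  by_cases hzb : z = b
  · exact Or.inr (Or.inl hzb)
  exact Or.inr (Or.inr (hcover z hz hza hzb))

lemma MaxPairClosure.false_of_adj_cover_erase (hmax : MaxPairClosure G L I)
    (hsIL : s ∈ I ∩ L) (hs : ∀ z ∈ I, z ≠ s → G.Adj s z) (ha : a ∈ I) (hb : b ∈ I)
    (has : a ≠ s) (hbs : b ≠ s) (hab : G.Adj a b) (hy : y ∉ I) (hya : G.Adj y a) {m : V}
    (haI : ∀ z ∈ I, z ≠ a → z ≠ m → G.Adj a z) (hm : 2 ≤ G.degree m)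
    (hmI : ∀ z, G.Adj m z → z ∈ I) : False := by
  obtain ⟨hsI, hsL⟩ := mem_inter.mp hsIL
  have hmem := mem_bootClosure_pair_of_adj hs ha hb has hbs hab hy hya
  have hIm : ∀ z ∈ I, z ≠ m → z ∈ bootClosure G 2 {y, b} := fun z hz hzm =>
    hmem z hz (if hza : z = a then Or.inl hza else Or.inr (Or.inr (Or.inl (haI z hz hza hzm))))
  -- all neighbours of `m` lie in `I \ {m}`, hence already in the closure
  have hmT : m ∈ bootClosure G 2 {y, b} := by
    refine mem_of_le_card_inter_of_bootStep_eq (bootStep_bootClosure G 2 {y, b}) ?_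
    rwa [inter_eq_left.mpr fun z hz => hIm z (hmI z ((G.mem_neighborFinset _ _).mp hz))
      (G.ne_of_adj ((G.mem_neighborFinset _ _).mp hz)).symm, G.card_neighborFinset_eq_degree]
  exact hmax.false_of_subset (show y ≠ b from fun h => hy (h ▸ hb)) hy
    (hmem s hsI (Or.inr (Or.inr (Or.inl (hs a ha has).symm)))) hsL fun z hz =>
      if hzm : z = m then hzm ▸ hmT else hIm z hz hzm

lemma MaxPairClosure.false_of_nonadj_pair (hmax : MaxPairClosure G L I) (hsIL : s ∈ I ∩ L)
    (hs : ∀ z ∈ I, z ≠ s → G.Adj s z) (ha : a ∈ I) (hb : b ∈ I) (has : a ≠ s)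
    (hbs : b ≠ s) (hy : y ∉ I) (hya : G.Adj y a) (haI : ∀ z ∈ I, z ≠ a → z ≠ b → G.Adj a z)
    (hbI : ∀ z ∈ I, z ≠ b → z ≠ a → G.Adj b z) (hI4 : 4 ≤ #I) : False := by
  obtain ⟨hsI, hsL⟩ := mem_inter.mp hsIL
  have hys : y ≠ s := fun h => hy (h ▸ hsI)
  have hT := bootStep_bootClosure G 2 {y, s}
  have hyT := subset_bootClosure G 2 {y, s} (mem_insert_self y {s})
  have hsT := subset_bootClosure G 2 {y, s} (mem_insert_of_mem (mem_singleton_self s))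
  have haT := mem_of_adj_of_adj hT hyT hsT hys hya.symm (hs a ha has).symm
  have hIb : ∀ z ∈ I, z ≠ b → z ∈ bootClosure G 2 {y, s} := fun z hz hzb => by
    by_cases hza : z = a
    · exact hza ▸ haT
    by_cases hzs : z = s
    · exact hzs ▸ hsT
    exact mem_of_adj_of_adj hT hsT haT (Ne.symm has) (hs z hz hzs).symm (haI z hz hza hzb).symm
  obtain ⟨c, hc⟩ : (I \ {a, b, s}).Nonempty := card_pos.mp <| by
    have := le_card_sdiff {a, b, s} I
    have := card_le_three (a := a) (b := b) (c := s)
    omega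
  simp only [mem_sdiff, mem_insert, mem_singleton, not_or] at hc
  obtain ⟨hcI, hca, hcb, hcs⟩ := hc
  have hbT := mem_of_adj_of_adj hT (hIb c hcI hcb) hsT hcs (hbI c hcI hcb hca)
    (hs b hb hbs).symm
  exact hmax.false_of_subset hys hy hsT hsL fun z hz =>
    if hzb : z = b then hzb ▸ hbT else hIb z hz hzb

lemma MaxPairClosure.false_of_near_universal (hmax : MaxPairClosure G L I)
    (hsIL : s ∈ I ∩ L) (hs : ∀ z ∈ I, z ≠ s → G.Adj s z) {N : Finset V} (hNI : N ⊆ I)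
    (hN2 : 2 ≤ #N) (hI4 : 4 ≤ #I) (hout : ∀ h ∈ N, ∃ y ∉ I, G.Adj y h)
    (hmiss : ∀ h ∈ N, ∃ m ∈ I, m ≠ h ∧ ¬ G.Adj h m ∧ ∀ z ∈ I, z ≠ h → z ≠ m → G.Adj h z)
    (hrest : ∀ m ∈ I \ N, 2 ≤ G.degree m ∧ ∀ z, G.Adj m z → z ∈ I) : False := by
  have hNs : ∀ h ∈ N, h ≠ s := fun h hh hhs => by
    obtain ⟨m, hm, hmh, hhm, -⟩ := hmiss h hh
    exact hhm (hhs ▸ hs m hm (hhs ▸ hmh))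
  have hnonadj : ∀ a ∈ N, ∀ b ∈ N, a ≠ b → ¬ G.Adj a b → False := fun a ha b hb hab hnab => by
    obtain ⟨ma, -, -, -, hadja⟩ := hmiss a ha
    obtain ⟨mb, -, -, -, hadjb⟩ := hmiss b hb
    obtain rfl : ma = b := by_contra fun h => hnab (hadja b (hNI hb) hab.symm (Ne.symm h))
    obtain rfl : mb = a := by_contra fun h => hnab (hadjb _ (hNI ha) hab (Ne.symm h)).symm
    obtain ⟨y, hy, hya⟩ := hout _ ha
    exact hmax.false_of_nonadj_pair hsIL hs (hNI ha) (hNI hb) (hNs _ ha) (hNs _ hb) hy hya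
      hadja hadjb hI4
  obtain ⟨a, ha, b, hb, hab⟩ := one_lt_card.mp hN2
  by_cases hadj : G.Adj a b
  swap
  · exact hnonadj a ha b hb hab hadj
  obtain ⟨ma, hma, hmaa, hnma, hadja⟩ := hmiss a ha
  obtain ⟨mb, -, -, -, hadjb⟩ := hmiss b hb
  obtain ⟨y, hy, hya⟩ := hout a ha
  by_cases hm : ma = mb
  · subst hm
    by_cases hmN : ma ∈ N
    · exact hnonadj a ha ma hmN (Ne.symm hmaa) hnma
    obtain ⟨hdeg, hmI⟩ := hrest ma (mem_sdiff.mpr ⟨hma, hmN⟩)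
    exact hmax.false_of_adj_cover_erase hsIL hs (hNI ha) (hNI hb) (hNs a ha) (hNs b hb) hadj hy
      hya hadja hdeg hmI
  · exact hmax.false_of_adj_cover hsIL hs (hNI ha) (hNI hb) (hNs a ha) (hNs b hb) hadj hy hya
      fun z hz hza hzb => if hzma : z = ma then Or.inr (hadjb z hz hzb (hzma ▸ hm))
        else Or.inl (hadja z hz hza hzma)

end MaxPairClosure

section Cases

variable {V : Type*} [Fintype V] {G : SimpleGraph V} {L I : Finset V}

lemma card_sub_one_le_card_bootClosure_pair (hn : 4 ≤ Fintype.card V) {y w g : V}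
    (hyw : G.Adj y w) (hy : ∀ z, G.Adj y z → z = w) (hy1 : G.degree y = 1)
    (hB : 2 ≤ #{v | Fintype.card V - 2 ≤ G.degree v}) (hg : Fintype.card V - 2 ≤ G.degree g)
    (hgw : g ≠ w) : Fintype.card V - 1 ≤ #(bootClosure G 2 {y, g}) := by
  have hne : ∀ v, Fintype.card V - 2 ≤ G.degree v → y ≠ v := fun v hv hyv => by
    rw [← hyv, hy1] at hv
    omega
  have hadj : ∀ v, Fintype.card V - 2 ≤ G.degree v → v ≠ w → ∀ z, z ≠ v → z ≠ y → G.Adj v z :=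
    fun v hv hvw _ => adj_of_card_sub_two_le_degree hv (fun h => hvw (hy v h.symm)) (hne v hv)
  have hwy : w ≠ y := (G.ne_of_adj hyw).symm
  have hS := bootStep_bootClosure G 2 {y, g}
  have hyS := subset_bootClosure G 2 {y, g} (mem_insert_self y {g})
  have hgS := subset_bootClosure G 2 {y, g} (mem_insert_of_mem (mem_singleton_self g))
  generalize bootClosure G 2 {y, g} = S at hS hyS hgS ⊢
  have hwS : w ∈ S :=
    mem_of_adj_of_adj hS hyS hgS (hne g hg) hyw.symm (hadj g hg hgw w hgw.symm hwy).symm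
  by_cases hthird : ∃ g', Fintype.card V - 2 ≤ G.degree g' ∧ g' ≠ g ∧ g' ≠ w
  · obtain ⟨g', hg', hg'g, hg'w⟩ := hthird
    have hg'S : g' ∈ S := mem_of_adj_of_adj hS hgS hwS hgw
      (hadj g' hg' hg'w g (Ne.symm hg'g) (hne g hg).symm) (hadj g' hg' hg'w w (Ne.symm hg'w) hwy)
    have hSu : univ.erase y ⊆ S := subset_of_adj_of_adj hS hgS hg'S (Ne.symm hg'g)
      fun z hz hzg hzg' => ⟨(hadj g hg hgw z hzg (ne_of_mem_erase hz)).symm,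
        (hadj g' hg' hg'w z hzg' (ne_of_mem_erase hz)).symm⟩
    have := card_le_card (insert_erase (mem_univ y) ▸ insert_subset hyS hSu)
    rw [card_univ] at this
    omega
  -- otherwise the second vertex of degree `≥ n - 2` is `w`, and its neighbourhood joins `S`
  have hw : Fintype.card V - 2 ≤ G.degree w := by
    obtain ⟨g', hg', hg'g⟩ :=
      exists_mem_ne (by omega : 1 < #{v | Fintype.card V - 2 ≤ G.degree v}) g
    by_contra hw
    exact hthird ⟨g', (mem_filter.mp hg').2, hg'g, fun h => hw (h ▸ (mem_filter.mp hg').2)⟩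
  have hNS : insert w (G.neighborFinset w) ⊆ S := insert_subset hwS fun z hz => by
    rw [G.mem_neighborFinset] at hz
    by_cases hzy : z = y
    · exact hzy ▸ hyS
    by_cases hzg : z = g
    · exact hzg ▸ hgS
    exact mem_of_adj_of_adj hS hwS hgS (Ne.symm hgw) hz.symm (hadj g hg hgw z hzg hzy).symm
  have := card_le_card hNS
  rw [card_insert_of_notMem (G.notMem_neighborFinset_self w), G.card_neighborFinset_eq_degree]
    at this
  omega

lemma false_of_card_compl_eq_one (hI : bootStep G 2 I = I) (hmax : MaxPairClosure G L I)
    (hconn : G.Connected) (hL : ∀ v, v ∈ L ↔ Fintype.card V / 2 ≤ G.degree v)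
    (hchv : WeakChvatal G) (hdeg1 : #{v | G.degree v = 1} ≤ 1) (hn : 4 ≤ Fintype.card V)
    (hu : #Iᶜ = 1) : False := by
  have hcard := card_add_card_compl I
  have : Nontrivial V := Fintype.one_lt_card_iff_nontrivial.mp (by omega)
  have hpos := hconn.preconnected.degree_pos_of_nontrivial
  obtain ⟨x, hUx⟩ := card_eq_one.mp hu
  obtain ⟨a, ha⟩ : I.Nonempty := card_pos.mp (by omega)
  obtain ⟨y, hy, w, hw, hyw⟩ :=
    hconn.exists_adj_notMem_mem ha (mem_compl.mp (hUx ▸ mem_singleton_self x))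
  have hy1 : G.degree y = 1 :=
    le_antisymm (hu ▸ degree_le_card_compl_of_bootStep_eq hI hy) (hpos y)
  have hyonly : ∀ z, G.Adj y z → z = w := fun z hz =>
    card_le_one.mp (G.card_neighborFinset_eq_degree y ▸ hy1.le) z
      ((G.mem_neighborFinset _ _).mpr hz) w ((G.mem_neighborFinset _ _).mpr hyw)
  have hB : 2 ≤ #{v | Fintype.card V - 2 ≤ G.degree v} :=
    hchv 1 le_rfl (by omega) (card_pos.mpr ⟨y, mem_filter.mpr ⟨mem_univ y, hy1.le⟩⟩)
  obtain ⟨g, hg, hgw⟩ := exists_mem_ne (by omega : 1 < #{v | Fintype.card V - 2 ≤ G.degree v}) w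
  have hg' := (mem_filter.mp hg).2
  have hyg : y ≠ g := fun h => by rw [← h, hy1] at hg'; omega
  have hS := bootStep_bootClosure G 2 {y, g}
  have hyS := subset_bootClosure G 2 {y, g} (mem_insert_self y {g})
  have hSI := hmax.card_le hyg (subset_bootClosure G 2 {y, g}
    (mem_insert_of_mem (mem_singleton_self g))) ((hL g).mpr (by omega))
  have hSn := card_sub_one_le_card_bootClosure_pair hn hyw hyonly hy1 hB hg' hgw
  generalize bootClosure G 2 {y, g} = S at hS hyS hSI hSn
  -- the closure misses exactly one vertex `v`, which then has all its neighbours in it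
  have := card_add_card_compl S
  obtain ⟨v, hv⟩ := card_eq_one.mp (show #Sᶜ = 1 by omega)
  have hvS : v ∉ S := mem_compl.mp (hv ▸ mem_singleton_self v)
  have hv1 : G.degree v = 1 := le_antisymm
    ((degree_le_card_compl_of_bootStep_eq hS hvS).trans (by omega)) (hpos v)
  have := card_le_card (s := {v, y}) (t := {v | G.degree v = 1}) <| insert_subset
    (mem_filter.mpr ⟨mem_univ v, hv1⟩) (singleton_subset_iff.mpr (mem_filter.mpr ⟨mem_univ y, hy1⟩))
  rw [card_pair (show v ≠ y from fun h => hvS (h ▸ hyS))] at this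
  omega

lemma WeakChvatal.two_le_degree_of_degree_lt_card (hchv : WeakChvatal G)
    (hI : bootStep G 2 I = I) (hu : 2 ≤ #Iᶜ) (huk : #Iᶜ + 3 ≤ Fintype.card V)
    (hdeg : ∀ v ∈ I, G.degree v < #I) (v : V) : 2 ≤ G.degree v := by
  have hcard := card_add_card_compl I
  refine hchv.two_le_degree (by omega) (fun v => ?_) v
  by_cases hvI : v ∈ I
  · have := hdeg v hvI
    omega
  · have := degree_le_card_compl_of_bootStep_eq hI hvI
    omega

lemma exists_universal_of_subset (hI : bootStep G 2 I = I) (hmax : MaxPairClosure G L I)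
    (hconn : G.Connected) (hL : ∀ v, v ∈ L ↔ Fintype.card V / 2 ≤ G.degree v)
    (hu : 2 ≤ #Iᶜ) (hIk : Fintype.card V / 2 + 1 ≤ #I) {H : Finset V} (hHI : H ⊆ I)
    (hH : #Iᶜ + 1 ≤ #H) (hHdeg : ∀ h ∈ H, #I - 1 ≤ G.degree h) :
    ∃ s ∈ I ∩ L, (∀ z ∈ I, z ≠ s → G.Adj s z) ∧ ∃ N ⊆ I, 2 ≤ #N ∧
      (∀ h ∈ N, degIn G Iᶜ h = 1 ∧ degIn G I h + 2 = #I) ∧ ∀ w ∈ I \ N, degIn G Iᶜ w = 0 := by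
  obtain ⟨x, hx⟩ : Iᶜ.Nonempty := card_pos.mp (by omega)
  have hsplit := card_filter_add_card_filter_not (s := H) (p := fun h => #I - 1 ≤ degIn G I h)
  set A := H.filter fun h => #I - 1 ≤ degIn G I h
  set N := H.filter fun h => ¬ #I - 1 ≤ degIn G I h
  have hAuniv : ∀ h ∈ A, ∀ z ∈ I, z ≠ h → G.Adj h z := fun h hh _ =>
    adj_of_card_sub_one_le_degIn (hHI (mem_filter.mp hh).1) (mem_filter.mp hh).2
  have hAIL : ∀ h ∈ A, h ∈ I ∩ L := fun h hh => mem_inter.mpr ⟨hHI (mem_filter.mp hh).1,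
    (hL h).mpr ((hHdeg h (mem_filter.mp hh).1).trans' (by omega))⟩
  have hA : #A ≤ 1 := card_le_one.mpr fun h hh h' hh' => by
    by_contra hne
    exact hmax.false_of_two_universal hconn (mem_compl.mp hx) (hAIL h hh) (hAIL h' hh') hne
      (hAuniv h hh) (hAuniv h' hh')
  have hNI : N ⊆ I := (filter_subset _ _).trans hHI
  have hNdeg : ∀ h ∈ N, degIn G I h + 1 < #I ∧ #I - 1 ≤ degIn G I h + degIn G Iᶜ h :=
    fun h hh => by
      have := (mem_filter.mp hh).2
      have := hHdeg h (mem_filter.mp hh).1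
      have := degIn_add_degIn_compl (G := G) I h
      omega
  have hsumN : ∑ h ∈ N, degIn G Iᶜ h ≤ #Iᶜ :=
    (sum_le_sum_of_subset hNI).trans (sum_degIn_compl_le_of_bootStep_eq hI)
  have hNpos : ∀ h ∈ N, 1 ≤ degIn G Iᶜ h := fun h hh => by
    have := hNdeg h hh
    omega
  have hNone := eq_one_of_sum_le_card hNpos (hsumN.trans (by omega))
  have hNsum : #N ≤ ∑ h ∈ N, degIn G Iᶜ h := by simpa using card_nsmul_le_sum N _ 1 hNpos
  obtain ⟨s, hs⟩ := card_pos.mp (show 0 < #A by omega)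
  refine ⟨s, hAIL s hs, hAuniv s hs, N, hNI, by omega, fun h hh => ⟨hNone h hh, ?_⟩, ?_⟩
  · have := hNdeg h hh
    have := hNone h hh
    omega
  · have := sum_sdiff (f := degIn G Iᶜ) hNI
    have := sum_degIn_compl_le_of_bootStep_eq hI
    exact sum_eq_zero_iff.mp (by omega)

lemma false_of_two_le_card_compl_lt_half (hI : bootStep G 2 I = I)
    (hmax : MaxPairClosure G L I) (hconn : G.Connected)
    (hL : ∀ v, v ∈ L ↔ Fintype.card V / 2 ≤ G.degree v) (hchv : WeakChvatal G)
    (hu : 2 ≤ #Iᶜ) (huk : #Iᶜ < Fintype.card V / 2) : False := by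
  have hcard := card_add_card_compl I
  have hH : #Iᶜ + 1 ≤ #{v | Fintype.card V - #Iᶜ - 1 ≤ G.degree v} :=
    hchv _ (by omega) (by omega) <| card_le_card fun v hv =>
      mem_filter.mpr ⟨mem_univ v, degree_le_card_compl_of_bootStep_eq hI (mem_compl.mp hv)⟩
  have hHI : ({v | Fintype.card V - #Iᶜ - 1 ≤ G.degree v} : Finset V) ⊆ I := fun v hv => by
    by_contra hvI
    have := degree_le_card_compl_of_bootStep_eq hI hvI
    have := (mem_filter.mp hv).2
    omega
  obtain ⟨s, hsIL, hs, N, hNI, hN2, hN, hN0⟩ := exists_universal_of_subset hI hmax hconn hL hu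
    (by omega) hHI hH fun h hh => (mem_filter.mp hh).2.trans' (by omega)
  have hdeg2 := hchv.two_le_degree_of_degree_lt_card hI hu (by omega) fun v hv => by
    have := degIn_add_degIn_compl (G := G) I v
    by_cases hvN : v ∈ N
    · have := hN v hvN
      omega
    · have := hN0 v (mem_sdiff.mpr ⟨hv, hvN⟩)
      have := degIn_le_card_sub_one (G := G) hv
      omega
  refine hmax.false_of_near_universal hsIL hs hNI hN2 (by omega) (fun h hh => ?_)
    (fun h hh => exists_nonadj_of_degIn_add_two_eq (hNI hh) (hN h hh).2)
    (fun m hm => ⟨hdeg2 m, fun z hz => by_contra fun hzI => ?_⟩)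
  · obtain ⟨y, hy, hhy⟩ := exists_adj_of_degIn_pos (G := G) (s := Iᶜ) (v := h)
      ((hN h hh).1 ▸ one_pos)
    exact ⟨y, mem_compl.mp hy, hhy.symm⟩
  · exact degIn_eq_zero (hN0 m hm) (mem_compl.mpr hzI) hz

lemma false_of_card_le_card_compl_add_two (hI : bootStep G 2 I = I)
    (hmax : MaxPairClosure G L I) (hconn : G.Connected)
    (hL : ∀ v, v ∈ L ↔ Fintype.card V / 2 ≤ G.degree v) (hchv : WeakChvatal G)
    (hodd : Fintype.card V = 2 * #Iᶜ + 1) (hk : 2 ≤ #Iᶜ) (hLk : #L ≤ #Iᶜ + 2) :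
    False := by
  have hcard := card_add_card_compl I
  obtain ⟨x, hx⟩ : Iᶜ.Nonempty := card_pos.mp (by omega)
  have hH := hchv.le_card_filter_succ_le_degree hL hodd hk hLk
  set H : Finset V := {v | #Iᶜ + 1 ≤ G.degree v}
  have hHI : H ⊆ I := fun v hv => by
    by_contra hvI
    have := degree_le_card_compl_of_bootStep_eq hI hvI
    have := (mem_filter.mp hv).2
    omega
  have hpos : ∀ h ∈ H, 1 ≤ degIn G Iᶜ h := fun h hh => by
    have := degIn_le_card_sub_one (G := G) (hHI hh)
    have := degIn_add_degIn_compl (G := G) I h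
    have := (mem_filter.mp hh).2
    omega
  have hone := eq_one_of_sum_le_card hpos <|
    ((sum_le_sum_of_subset hHI).trans (sum_degIn_compl_le_of_bootStep_eq hI)).trans hH
  have huniv : ∀ h ∈ H, ∀ z ∈ I, z ≠ h → G.Adj h z := fun h hh z hz hzh => by
    have := hone h hh
    have := degIn_add_degIn_compl (G := G) I h
    have := (mem_filter.mp hh).2
    exact adj_of_card_sub_one_le_degIn (hHI hh) (by omega) hz hzh
  have hHL : ∀ h ∈ H, h ∈ I ∩ L := fun h hh =>
    mem_inter.mpr ⟨hHI hh, (hL h).mpr (by have := (mem_filter.mp hh).2; omega)⟩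
  obtain ⟨h, hh, h', hh', hne⟩ := one_lt_card.mp (by omega : 1 < #H)
  exact hmax.false_of_two_universal hconn (mem_compl.mp hx) (hHL h hh) (hHL h' hh') hne
    (huniv h hh) (huniv h' hh')

lemma one_le_degIn_and_adj_of_mem_compl (hI : bootStep G 2 I = I)
    (hL : ∀ v, v ∈ L ↔ Fintype.card V / 2 ≤ G.degree v)
    (hodd : Fintype.card V = 2 * #Iᶜ + 1) {x : V} (hx : x ∈ L ∩ Iᶜ) :
    1 ≤ degIn G I x ∧ ∀ z ∉ I, z ≠ x → G.Adj x z := by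
  obtain ⟨hxL, hxI⟩ := mem_inter.mp hx
  have := (hL x).mp hxL
  have := degIn_le_one_of_bootStep_eq hI (mem_compl.mp hxI)
  have := degIn_le_card_sub_one (G := G) hxI
  have := degIn_add_degIn_compl (G := G) I x
  have := card_pos.mpr ⟨x, hxI⟩
  exact ⟨by omega, fun z hz => adj_of_card_sub_one_le_degIn hxI (by omega) (mem_compl.mpr hz)⟩

lemma isClique_erase_of_adj (hI : bootStep G 2 I = I) (hmax : MaxPairClosure G L I)
    (hL : ∀ v, v ∈ L ↔ Fintype.card V / 2 ≤ G.degree v)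
    (hodd : Fintype.card V = 2 * #Iᶜ + 1) (hIL : I ⊆ L) {x x' w : V} (hx : x ∈ L ∩ Iᶜ)
    (hx' : x' ∈ L ∩ Iᶜ) (hxx' : x ≠ x') (hw : w ∈ I) (hx'w : G.Adj x' w) :
    G.IsClique (I.erase w : Set V) := by
  have hcard := card_add_card_compl I
  have hxI := mem_compl.mp (mem_inter.mp hx).2
  have hxw : x ≠ w := fun h => hxI (h ▸ hw)
  have hS := bootStep_bootClosure G 2 {x, w}
  have hxS := subset_bootClosure G 2 {x, w} (mem_insert_self x {w})
  have hwS := subset_bootClosure G 2 {x, w} (mem_insert_of_mem (mem_singleton_self w))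
  have hSI := hmax.card_le hxw hxS (mem_inter.mp hx).1
  generalize bootClosure G 2 {x, w} = S at hS hxS hwS hSI
  have hadj := (one_le_degIn_and_adj_of_mem_compl hI hL hodd hx).2
  have hadj' := (one_le_degIn_and_adj_of_mem_compl hI hL hodd hx').2
  have hx'S : x' ∈ S :=
    mem_of_adj_of_adj hS hxS hwS hxw (hadj x' (mem_compl.mp (mem_inter.mp hx').2) hxx'.symm).symm
      hx'w
  have hsub : insert w Iᶜ ⊆ S := insert_subset hwS <| subset_of_adj_of_adj hS hxS hx'S hxx'
    fun z hz hzx hzx' =>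
      ⟨(hadj z (mem_compl.mp hz) hzx).symm, (hadj' z (mem_compl.mp hz) hzx').symm⟩
  -- by maximality of `I`, the closure of `{x, w}` is exactly `Iᶜ ∪ {w}`
  have hSeq : insert w Iᶜ = S := eq_of_subset_of_card_le hsub <| by
    rw [card_insert_of_notMem (by simpa using hw)]
    omega
  have hSc : #Sᶜ = #Iᶜ := by
    have := card_add_card_compl S
    have : #S = #Iᶜ + 1 := by rw [← hSeq, card_insert_of_notMem (by simpa using hw)]
    omega
  intro z hz z' hz' hzz'
  rw [coe_erase, Set.mem_sdiff, mem_coe, Set.mem_singleton_iff] at hz hz'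
  have hzS : z ∉ S := by rw [← hSeq]; simp [hz.2, hz.1]
  have hz'S : z' ∉ S := by rw [← hSeq]; simp [hz'.2, hz'.1]
  have := degIn_le_one_of_bootStep_eq hS hzS
  have := degIn_add_degIn_compl (G := G) S z
  have := (hL z).mp (hIL hz.1)
  exact adj_of_card_sub_one_le_degIn (mem_compl.mpr hzS) (by omega) (mem_compl.mpr hz'S)
    (Ne.symm hzz')

lemma false_of_isClique_erase (hI : bootStep G 2 I = I) (hmax : MaxPairClosure G L I)
    (hconn : G.Connected) (hL : ∀ v, v ∈ L ↔ Fintype.card V / 2 ≤ G.degree v)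
    (hodd : Fintype.card V = 2 * #Iᶜ + 1) (hk : 3 ≤ #Iᶜ) (hIL : I ⊆ L) {w : V} (hw : w ∈ I)
    (hcl : G.IsClique (I.erase w : Set V)) : False := by
  have hcard := card_add_card_compl I
  obtain ⟨x, hx⟩ : Iᶜ.Nonempty := card_pos.mp (by omega)
  have hw1 := hmax.degIn_le_one_of_isClique_erase hconn (mem_compl.mp hx) hIL hcl
  have hT : #Iᶜ - 1 ≤ #(I.erase w \ G.neighborFinset w) := by
    have hsplit := card_sdiff_add_card_inter (I.erase w) (G.neighborFinset w)
    have : #(I.erase w ∩ G.neighborFinset w) ≤ degIn G I w :=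
      card_le_card fun z hz => by
        rw [inter_comm] at hz
        exact inter_subset_inter_left (erase_subset w I) hz
    rw [card_erase_of_mem hw] at hsplit
    omega
  set T := I.erase w \ G.neighborFinset w
  have hTpos : ∀ z ∈ T, 1 ≤ degIn G Iᶜ z := fun z hz => by
    obtain ⟨hzI', hwz⟩ := mem_sdiff.mp hz
    rw [G.mem_neighborFinset] at hwz
    obtain ⟨hzw, hzI⟩ := mem_erase.mp hzI'
    have : degIn G I z ≤ #((I.erase w).erase z) := card_le_card fun p hp => by
      obtain ⟨hzp, hpI⟩ := mem_inter.mp hp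
      rw [G.mem_neighborFinset] at hzp
      refine mem_erase.mpr ⟨(G.ne_of_adj hzp).symm, mem_erase.mpr ⟨?_, hpI⟩⟩
      rintro rfl
      exact hwz hzp.symm
    rw [card_erase_of_mem (mem_erase.mpr ⟨hzw, hzI⟩), card_erase_of_mem hw] at this
    have := degIn_add_degIn_compl (G := G) I z
    have := (hL z).mp (hIL hzI)
    omega
  have hwU : #Iᶜ - 1 ≤ degIn G Iᶜ w := by
    have := degIn_add_degIn_compl (G := G) I w
    have := (hL w).mp (hIL hw)
    omega
  have hsum := calc
    degIn G Iᶜ w + #T ≤ degIn G Iᶜ w + ∑ z ∈ T, degIn G Iᶜ z := by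
        simpa using card_nsmul_le_sum T _ 1 hTpos
    _ = ∑ z ∈ insert w T, degIn G Iᶜ z := (sum_insert (by simp [T])).symm
    _ ≤ ∑ z ∈ I, degIn G Iᶜ z :=
        sum_le_sum_of_subset (insert_subset hw (sdiff_subset.trans (erase_subset _ _)))
    _ ≤ #Iᶜ := sum_degIn_compl_le_of_bootStep_eq hI
  omega

lemma false_of_card_eq_two_mul_card_compl_add_one (hI : bootStep G 2 I = I)
    (hmax : MaxPairClosure G L I) (hconn : G.Connected)
    (hL : ∀ v, v ∈ L ↔ Fintype.card V / 2 ≤ G.degree v) (hchv : WeakChvatal G)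
    (hodd : Fintype.card V = 2 * #Iᶜ + 1) (hk : 3 ≤ #Iᶜ) (hLU : #(L ∩ Iᶜ) ≤ 2) : False := by
  by_cases hLk : #L ≤ #Iᶜ + 2
  · exact false_of_card_le_card_compl_add_two hI hmax hconn hL hchv hodd (by omega) hLk
  have hcard := card_add_card_compl I
  have hsplit := card_inter_add_card_inter_compl L I
  have hLI : L ∩ I = I := eq_of_subset_of_card_le inter_subset_right (by omega)
  rw [hLI] at hsplit
  obtain ⟨x, x', hxx', hLU2⟩ := card_eq_two.mp (show #(L ∩ Iᶜ) = 2 by omega)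
  have hx : x ∈ L ∩ Iᶜ := hLU2 ▸ mem_insert_self x {x'}
  have hx' : x' ∈ L ∩ Iᶜ := hLU2 ▸ mem_insert_of_mem (mem_singleton_self x')
  obtain ⟨w, hw, hx'w⟩ :=
    exists_adj_of_degIn_pos (one_le_degIn_and_adj_of_mem_compl hI hL hodd hx').1
  have hIL : I ⊆ L := hLI ▸ inter_subset_left
  exact false_of_isClique_erase hI hmax hconn hL hodd hk hIL hw
    (isClique_erase_of_adj hI hmax hL hodd hIL hx hx' hxx' hw hx'w)

lemma false_of_card_sub_half_le_card_compl (hI : bootStep G 2 I = I)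
    (hmax : MaxPairClosure G L I) (hconn : G.Connected)
    (hL : ∀ v, v ∈ L ↔ Fintype.card V / 2 ≤ G.degree v)
    (hLI : Fintype.card V - Fintype.card V / 2 ≤ #(L ∩ I) + 2) (hn : 13 ≤ Fintype.card V)
    (hu : Fintype.card V - Fintype.card V / 2 ≤ #Iᶜ) : False := by
  obtain ⟨x, hx⟩ : Iᶜ.Nonempty := card_pos.mp (by omega)
  have hcard := card_add_card_compl I
  obtain ⟨c, hc⟩ : ∃ c, c = Fintype.card V - Fintype.card V / 2 := ⟨_, rfl⟩
  obtain ⟨s, hs⟩ : ∃ s, #Iᶜ + 2 = s + c := ⟨#Iᶜ + 2 - c, by omega⟩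
  set P := (L ∩ I).filter fun w => #I - 1 ≤ degIn G I w
  have hP : #P ≤ 1 := card_le_one.mpr fun h hh h' hh' => by
    by_contra hne
    obtain ⟨hhLI, hhI⟩ := mem_filter.mp hh
    obtain ⟨hh'LI, hh'I⟩ := mem_filter.mp hh'
    rw [inter_comm] at hhLI hh'LI
    exact hmax.false_of_two_universal hconn (mem_compl.mp hx) hhLI hh'LI hne
      (fun z hz => adj_of_card_sub_one_le_degIn (mem_inter.mp hhLI).1 hhI hz)
      (fun z hz => adj_of_card_sub_one_le_degIn (mem_inter.mp hh'LI).1 hh'I hz)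
  have hsum := calc
    #((L ∩ I) \ P) * s ≤ ∑ w ∈ (L ∩ I) \ P, degIn G Iᶜ w := by
        rw [← smul_eq_mul]
        refine card_nsmul_le_sum _ _ _ fun w hw => ?_
        obtain ⟨hwLI, hwP⟩ := mem_sdiff.mp hw
        have := (hL w).mp (mem_inter.mp hwLI).1
        have := degIn_add_degIn_compl (G := G) I w
        have : ¬ #I - 1 ≤ degIn G I w := fun h => hwP (mem_filter.mpr ⟨hwLI, h⟩)
        omega
    _ ≤ ∑ w ∈ I, degIn G Iᶜ w := sum_le_sum_of_subset (sdiff_subset.trans inter_subset_right)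
    _ ≤ #Iᶜ := sum_degIn_compl_le_of_bootStep_eq hI
  have := le_card_sdiff P (L ∩ I)
  have hP' : c ≤ #((L ∩ I) \ P) + 3 := by omega
  have hc7 : 7 ≤ c := by omega
  have hcu : c ≤ #Iᶜ := by omega
  nlinarith

end Cases

theorem stmt14 {V : Type*} [Fintype V] (G : SimpleGraph V)
    (hconn : G.Connected)
    (n : ℕ) (hn : 13 ≤ n)
    (e : Fin n ≃ V)
    (hmono : ∀ i j : Fin n, i ≤ j → G.degree (e i) ≤ G.degree (e j))
    (hchv : ∀ i : ℕ, ∀ h1 : 1 ≤ i, ∀ h2 : 2 * i < n,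
      i + 1 ≤ G.degree (e ⟨i - 1, by omega⟩) ∨
      n - i - 1 ≤ G.degree (e ⟨n - i - 1, by omega⟩))
    (hdeg1 : (Finset.univ.filter (fun v => G.degree v = 1)).card ≤ 1)
    (hm : 2 < minContagious G 2)
    (L : Finset V) (hL : L = Finset.univ.filter (fun v => n - 1 ≤ 2 * G.degree v))
    (I : Finset V)
    (hIcl : ∃ A : Finset V, A.card = 2 ∧ I = bootClosure G 2 A)
    (hImax : ∀ A : Finset V, A.card = 2 → (bootClosure G 2 A ∩ L).Nonempty →
      (bootClosure G 2 A).card ≤ I.card) :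
    3 ≤ (L ∩ (Finset.univ \ I)).card := by
  obtain rfl : Fintype.card V = n := by simpa using (Fintype.card_congr e).symm
  obtain ⟨A, hA, hIA⟩ := hIcl
  have hI : bootStep G 2 I = I := hIA ▸ bootStep_bootClosure G 2 A
  have hL' : ∀ v, v ∈ L ↔ Fintype.card V / 2 ≤ G.degree v := fun v => by
    rw [hL, mem_filter]
    simp only [mem_univ, true_and]
    omega
  have hchv' : WeakChvatal G := weakChvatal_of_monotone (fun i j hij => hmono i j hij)
    fun i h1 h2 _ _ => hchv i h1 h2
  rw [← compl_eq_univ_sdiff]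
  by_contra! hLU
  have hLI : Fintype.card V - Fintype.card V / 2 ≤ #(L ∩ I) + 2 := by
    have := hchv'.card_sub_half_le hL' (by omega)
    have := card_inter_add_card_inter_compl L I
    omega
  rcases (by omega : #Iᶜ = 0 ∨ #Iᶜ = 1 ∨ (2 ≤ #Iᶜ ∧ #Iᶜ < Fintype.card V / 2) ∨
    Fintype.card V = 2 * #Iᶜ + 1 ∨ Fintype.card V - Fintype.card V / 2 ≤ #Iᶜ)
    with hu | hu | hu | hu | hu
  · exact bootClosure_ne_univ_of_card_lt G 2 (by rwa [hA]) <|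
      hIA ▸ (compl_eq_empty_iff I).mp (card_eq_zero.mp hu)
  · exact false_of_card_compl_eq_one hI hImax hconn hL' hchv' hdeg1 (by omega) hu
  · exact false_of_two_le_card_compl_lt_half hI hImax hconn hL' hchv' hu.1 hu.2
  · exact false_of_card_eq_two_mul_card_compl_add_one hI hImax hconn hL' hchv' hu (by omega)
      (by omega)
  · exact false_of_card_sub_half_le_card_compl hI hImax hconn hL' hLI (by omega) hu
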